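/- Theorem 2 (general form): let {u_n(t)} solve the (N,α)-regularized initial value problem with initial data a, and let t = m + τ_{i_1} + ⋯ + τ_{i_k} with integers m ≥ 0 and 0 = i_0 < i_1 < ⋯ < i_k ≤ N. Then (u_{i_k}(t), u_{i_k+1}(t), …) = Ψ_k ∘ ⋯ ∘ Ψ_1 ∘ (φ^{(N,α)})^{∘m}(a), where Ψ_j = ξ ∘ σ_+^{Δi_j − 1} + φ^{(N−i_j,α)} ∘ σ_+^{Δi_j} and Δi_j = i_j − i_{j−1}. -/

import Mathlib

/-!
Dynamics on the fractal space-time lattice (scales `n = 0,1,2,…`, turnover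
times `τ_n = 2⁻ⁿ`).  The state of scale `n` at lattice time `t = m * τ_n`
is encoded as `u n m` (per-scale time index `m`).
-/

/-- The transfer fraction `f_n(t)` of the `(N,α)`-regularized system at scale `n`
and per-scale time index `m` (so real time `t = m * 2⁻ⁿ`):
`f_n(t) = f (u_n(t), u_{n+1}(t))` for `n < N` and `f_N(t) = α`.
Note that `u_{n+1}(t)` has per-scale time index `2 * m`. -/
noncomputable def transfer (f : ℝ → ℝ → ℝ) (N : ℕ) (α : ℝ) (u : ℕ → ℕ → ℝ)
    (n m : ℕ) : ℝ :=
  if n < N then f (u n m) (u (n + 1) (2 * m)) else α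

/-- `IsSol f N α a u` says that the field `{u_n(t)}`, encoded as `u n m` with
`t = m * τ_n`, `τ_n = 2⁻ⁿ`, solves the `(N,α)`-regularized initial value
problem on the fractal lattice with initial data `a`:
* `u_n(0) = a_n`;
* for `n ≤ N` and `t = m * τ_n`,
  `u_n(t + τ_n) = (1 − f_n(t)) u_n(t) + χ_even(m) f_{n−1}(t) u_{n−1}(t)`,
  where `u_{−1} ≡ 0` (the incoming term is absent for `n = 0`) and `u_{n-1}(t)`
  has per-scale index `m / 2` (the incoming term is present only for even `m`);
* `u_n(t) = 0` for `n > N` and `t > 0`. -/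
noncomputable def IsSol (f : ℝ → ℝ → ℝ) (N : ℕ) (α : ℝ) (a : ℕ → ℝ)
    (u : ℕ → ℕ → ℝ) : Prop :=
  (∀ n, u n 0 = a n) ∧
  (∀ n, n ≤ N → ∀ m : ℕ,
    u n (m + 1) = (1 - transfer f N α u n m) * u n m +
      (if Even m ∧ n ≠ 0 then transfer f N α u (n - 1) (m / 2) * u (n - 1) (m / 2)
       else 0)) ∧
  (∀ n, N < n → ∀ m : ℕ, 0 < m → u n m = 0)

/-- `sol1 u` is the state `u(1)` at the large-scale turnover time `τ_0 = 1`: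
the `n`-th component is `u_n(1)`, whose per-scale time index is `2^n`. -/
def sol1 (u : ℕ → ℕ → ℝ) : ℕ → ℝ := fun n => u n (2 ^ n)

/-- The left shift `σ₊(a) = (a_1, a_2, …)`. -/
def sigmaPlus (a : ℕ → ℝ) : ℕ → ℝ := fun n => a (n + 1)

/-- The right shift `σ₋(a) = (0, a_0, a_1, …)`. -/
def sigmaMinus (a : ℕ → ℝ) : ℕ → ℝ := fun n => if n = 0 then 0 else a (n - 1)

/-- The large-scale projector `π₀(a) = (a_0, 0, 0, …)`. -/
def piZero (a : ℕ → ℝ) : ℕ → ℝ := fun n => if n = 0 then a 0 else 0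

/-- The energy transfer map `ξ(a) = (f(a_0,a_1)·a_0, 0, 0, …)`. -/
def xiMap (f : ℝ → ℝ → ℝ) (a : ℕ → ℝ) : ℕ → ℝ :=
  fun n => if n = 0 then f (a 0) (a 1) * a 0 else 0

/-!
The recursion is causal: the update of `u_n` at time `t` reads only values at times `≤ t`
on scales `n - 1, n, n + 1`. Start from a time at which scales `≥ I` are synchronised and
run for one turnover `τ_I`. Scale `I` makes a single step, and it receives inflow from
scale `I - 1` only at that step. So the scales `≥ I` evolve exactly like the
`(N - I, α)`-regularized system started from their current state, plus the one inflow
`f(u_{I-1}, u_I) u_{I-1}` at scale `I`, which is the `ξ` term. For `I = 0` there is no inflow,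
which accounts for `m` applications of the flow map `φ^{(N,α)}`. Each further `τ_{i_j}` is then
one turnover of scale `i_j`, acting on `σ₊^{Δi_j}` of the previous state.
-/

noncomputable def inflow (f : ℝ → ℝ → ℝ) (N : ℕ) (α : ℝ) (u : ℕ → ℕ → ℝ) (n m : ℕ) : ℝ :=
  if Even m ∧ n ≠ 0 then transfer f N α u (n - 1) (m / 2) * u (n - 1) (m / 2) else 0

/-- `shiftField u I e q m` is `u_{I+q}` at time `e τ_I + m τ_{I+q}`. -/
def shiftField (u : ℕ → ℕ → ℝ) (I e : ℕ) : ℕ → ℕ → ℝ :=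
  fun q m => u (I + q) (e * 2 ^ q + m)

/-- Per-scale time index at scale `n` of the time `m + τ_{i 1} + ⋯ + τ_{i k}`. -/
def timeIndex (m k : ℕ) (i : ℕ → ℕ) (n : ℕ) : ℕ :=
  m * 2 ^ n + ∑ j ∈ Finset.range k, 2 ^ (n - i (j + 1))

section

variable {f : ℝ → ℝ → ℝ} {N M : ℕ} {α : ℝ} {a b : ℕ → ℝ} {u v w : ℕ → ℕ → ℝ}

theorem sigmaPlus_iterate_apply (c : ℕ → ℝ) (t n : ℕ) : sigmaPlus^[t] c n = c (n + t) := by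
  induction t generalizing c with
  | zero => rfl
  | succ t ih => rw [Function.iterate_succ_apply, ih]; rfl

theorem xiMap_eq_single (c : ℕ → ℝ) : xiMap f c = Pi.single 0 (f (c 0) (c 1) * c 0) := by
  funext n
  simp [xiMap, Pi.single_apply]

theorem IsSol.step (hu : IsSol f N α a u) {n : ℕ} (hn : n ≤ N) (m : ℕ) :
    u n (m + 1) = (1 - transfer f N α u n m) * u n m + inflow f N α u n m :=
  hu.2.1 n hn m

theorem transfer_congr {n m : ℕ} (h : u n m = v n m)
    (hsucc : n < N → u (n + 1) (2 * m) = v (n + 1) (2 * m)) :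
    transfer f N α u n m = transfer f N α v n m := by
  unfold transfer
  split_ifs with hn
  · rw [h, hsucc hn]
  · rfl

theorem inflow_congr {n m : ℕ}
    (h : Even m → n ≠ 0 → u (n - 1) (m / 2) = v (n - 1) (m / 2) ∧ u n m = v n m) :
    inflow f N α u n m = inflow f N α v n m := by
  unfold inflow
  split_ifs with hm
  · obtain ⟨hprev, hcur⟩ := h hm.1 hm.2
    rw [transfer_congr hprev fun _ => ?_, hprev]
    rwa [Nat.sub_add_cancel (Nat.pos_of_ne_zero hm.2), Nat.two_mul_div_two_of_even hm.1]
  · rfl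

/-- Causality: the step at `(q, m)` only reads points of strictly smaller real time
`m * 2⁻ᵠ`, measured here in units of the finest scale `M`. Within one turnover of
scale `0`, scale `0` itself is never read after its initial value. -/
theorem eq_within_turnover_of_step
    (h0 : ∀ q, v q 0 = w q 0)
    (hv : ∀ q, 0 < q → q ≤ M → ∀ m,
      v q (m + 1) = (1 - transfer f M α v q m) * v q m + inflow f M α v q m)
    (hw : ∀ q, 0 < q → q ≤ M → ∀ m,
      w q (m + 1) = (1 - transfer f M α w q m) * w q m + inflow f M α w q m)
    (hv_zero : ∀ q, M < q → ∀ m, 0 < m → v q m = 0)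
    (hw_zero : ∀ q, M < q → ∀ m, 0 < m → w q m = 0) :
    ∀ q m, m ≤ 2 ^ q → (0 < q ∨ m = 0) → v q m = w q m := by
  intro q m
  induction hs : m * 2 ^ (M - q) using Nat.strong_induction_on generalizing q m with
  | _ s ih =>
  intro hm hqm
  rcases m with _ | m
  · exact h0 q
  rcases lt_or_ge M q with hMq | hqM
  · rw [hv_zero q hMq _ m.succ_pos, hw_zero q hMq _ m.succ_pos]
  have hq : 0 < q := by omega
  have earlier : ∀ q' m', m' * 2 ^ (M - q') = m * 2 ^ (M - q) → m' ≤ 2 ^ q' →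
      (0 < q' ∨ m' = 0) → v q' m' = w q' m' := fun q' m' heq =>
    ih _ (by rw [← hs, heq]; exact Nat.mul_lt_mul_of_pos_right m.lt_succ_self (by positivity))
      q' m' rfl
  have hcur : v q m = w q m := earlier q m rfl (by omega) (Or.inl hq)
  have htransfer : transfer f M α v q m = transfer f M α w q m := by
    refine transfer_congr hcur fun hlt => earlier (q + 1) (2 * m) ?_ ?_ (Or.inl q.succ_pos)
    · rw [show M - q = M - (q + 1) + 1 by omega, pow_succ]; ring
    · rw [pow_succ]; omega
  have hinflow : inflow f M α v q m = inflow f M α w q m := by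
    refine inflow_congr fun heven _ => ⟨earlier (q - 1) (m / 2) ?_ ?_ ?_, hcur⟩
    · conv_rhs => rw [← Nat.two_mul_div_two_of_even heven]
      rw [show M - (q - 1) = M - q + 1 by omega, pow_succ]
      ring
    · rw [show 2 ^ q = 2 * 2 ^ (q - 1) by rw [← pow_succ']; congr 1; omega] at hm
      omega
    · rcases Nat.lt_or_ge 1 q with h | h
      · exact Or.inl (by omega)
      · obtain ⟨c, rfl⟩ := heven
        rw [show q = 1 by omega] at hm
        exact Or.inr (by omega)
  rw [hv q hq hqM, hw q hq hqM, htransfer, hinflow, hcur]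

theorem transfer_shiftField (I e q m : ℕ) :
    transfer f N α u (I + q) (e * 2 ^ q + m) = transfer f (N - I) α (shiftField u I e) q m := by
  unfold transfer shiftField
  by_cases hq : q < N - I
  · rw [if_pos hq, if_pos (by omega), ← add_assoc, pow_succ]
    ring_nf
  · rw [if_neg hq, if_neg (by omega)]

theorem inflow_shiftField (I e : ℕ) {q : ℕ} (hq : 0 < q) (m : ℕ) :
    inflow f N α u (I + q) (e * 2 ^ q + m) = inflow f (N - I) α (shiftField u I e) q m := by
  obtain ⟨q, rfl⟩ : ∃ q', q = q' + 1 := ⟨q - 1, by omega⟩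
  have hshift : e * 2 ^ (q + 1) + m = 2 * (e * 2 ^ q) + m := by ring
  have hcond : (Even (2 * (e * 2 ^ q) + m) ∧ I + (q + 1) ≠ 0) ↔ (Even m ∧ q + 1 ≠ 0) := by
    simp [Nat.even_add]
  rw [inflow, inflow, hshift, if_congr hcond rfl rfl]
  split_ifs with hm
  · rw [Nat.mul_add_div two_pos, ← add_assoc, Nat.add_sub_cancel, transfer_shiftField]
    rfl
  · rfl

/-- Among the scales `≥ I`, only scale `I` receives inflow from outside, so off scale `I`
the shifted field obeys the `(N - I)`-regularized recursion. -/
theorem IsSol.shiftField_eq (hu : IsSol f N α a u) {I e : ℕ} (hw : IsSol f (N - I) α b w)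
    (hdata : ∀ n, u (I + n) (e * 2 ^ n) = b n) :
    ∀ q m, m ≤ 2 ^ q → (0 < q ∨ m = 0) → shiftField u I e q m = w q m :=
  eq_within_turnover_of_step (fun q => (hdata q).trans (hw.1 q).symm)
    (fun q hq hqM m => by
      simp only [shiftField, ← add_assoc]
      rw [hu.step (by omega), transfer_shiftField, inflow_shiftField I e hq])
    (fun q _ hqM => hw.step hqM)
    (fun q hq m hm => hu.2.2 _ (by omega) _ (by positivity))
    hw.2.2

theorem IsSol.turnover_eq_sol1_add_single (hu : IsSol f N α a u) {I e : ℕ} (hIN : I ≤ N)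
    (hw : IsSol f (N - I) α b w) (hdata : ∀ n, u (I + n) (e * 2 ^ n) = b n) :
    (fun q => u (I + q) ((e + 1) * 2 ^ q)) = sol1 w + Pi.single 0 (inflow f N α u I e) := by
  have hwin := hu.shiftField_eq hw hdata
  funext q
  rcases q with _ | q
  · have hcur : shiftField u I e 0 0 = w 0 0 := hwin 0 0 (Nat.zero_le _) (Or.inr rfl)
    have htransfer : transfer f N α u I e = transfer f (N - I) α w 0 0 := by
      simpa using (transfer_shiftField (f := f) (α := α) (u := u) I e 0 0).trans
        (transfer_congr hcur fun _ => hwin 1 0 (by simp) (Or.inr rfl))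
    have hw_step : w 0 1 = (1 - transfer f (N - I) α w 0 0) * w 0 0 := by
      simpa [inflow] using hw.step (Nat.zero_le _) 0
    simp only [shiftField, add_zero, pow_zero, mul_one] at hcur
    simp [sol1, hu.step hIN, hw_step, htransfer, hcur]
  · rw [Pi.add_apply, Pi.single_apply, if_neg q.succ_ne_zero, add_zero, add_mul, one_mul]
    exact hwin (q + 1) _ le_rfl (Or.inl q.succ_pos)

theorem IsSol.turnover_eq_xiMap_add_sol1 (hu : IsSol f N α a u) {I e : ℕ} (hIN : I < N)
    (hb : ∀ q, u (I + q) (e * 2 ^ q) = b q) (hw : IsSol f (N - (I + 1)) α (sigmaPlus b) w) :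
    (fun q => u (I + 1 + q) ((2 * e + 1) * 2 ^ q)) = xiMap f b + sol1 w := by
  have hdata : ∀ n, u (I + 1 + n) (2 * e * 2 ^ n) = sigmaPlus b n := fun n => by
    rw [sigmaPlus, ← hb (n + 1), pow_succ]
    ring_nf
  have hinflow : inflow f N α u (I + 1) (2 * e) = f (b 0) (b 1) * b 0 := by
    have h0 : u I e = b 0 := by simpa using hb 0
    have h1 : u (I + 1) (2 * e) = b 1 := by simpa [mul_comm] using hb 1
    rw [inflow, if_pos ⟨even_two_mul e, I.succ_ne_zero⟩, Nat.add_sub_cancel,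
      Nat.mul_div_cancel_left e two_pos, transfer, if_pos hIN, h0, h1]
  rw [hu.turnover_eq_sol1_add_single hIN hw hdata, hinflow, xiMap_eq_single, add_comm]

theorem IsSol.apply_mul_two_pow_eq_iterate (hu : IsSol f N α a u) {m : ℕ} {A : ℕ → ℕ → ℝ}
    (hA0 : A 0 = a) {V : ℕ → ℕ → ℕ → ℝ}
    (hV : ∀ r, r < m → IsSol f N α (A r) (V r) ∧ A (r + 1) = sol1 (V r)) :
    ∀ r ≤ m, ∀ n, u n (r * 2 ^ n) = A r n := by
  intro r hr n
  induction r generalizing n with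
  | zero => simpa [hA0] using hu.1 n
  | succ r ih =>
    obtain ⟨hVsol, hA⟩ := hV r hr
    have hstep := hu.turnover_eq_sol1_add_single (I := 0) (e := r) (Nat.zero_le N) hVsol
      (by simpa using ih (by omega))
    simp only [inflow, ne_eq, not_true_eq_false, and_false, if_false, Pi.single_zero,
      add_zero, zero_add] at hstep
    rw [hA, ← hstep]

theorem timeIndex_add_of_le {m k : ℕ} {i : ℕ → ℕ} {n : ℕ} (h : ∀ j < k, i (j + 1) ≤ n)
    (p : ℕ) : timeIndex m k i (n + p) = timeIndex m k i n * 2 ^ p := by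
  rw [timeIndex, timeIndex, add_mul, Finset.sum_mul, pow_add, mul_assoc]
  congr 1
  refine Finset.sum_congr rfl fun j hj => ?_
  rw [← pow_add, Nat.sub_add_comm (h j (Finset.mem_range.mp hj))]

theorem timeIndex_succ (m k : ℕ) (i : ℕ → ℕ) (n : ℕ) :
    timeIndex m (k + 1) i n = timeIndex m k i n + 2 ^ (n - i (k + 1)) := by
  rw [timeIndex, timeIndex, Finset.sum_range_succ, add_assoc]

theorem IsSol.apply_timeIndex_succ (hu : IsSol f N α a u) {m k : ℕ} {i : ℕ → ℕ}
    (hlt : i k < i (k + 1)) (hiN : i (k + 1) ≤ N) (hprev : ∀ j < k, i (j + 1) ≤ i k)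
    {c : ℕ → ℝ} (hc : ∀ q, u (i k + q) (timeIndex m k i (i k + q)) = c q)
    (hw : IsSol f (N - i (k + 1)) α (sigmaPlus^[i (k + 1) - i k] c) w) (q : ℕ) :
    u (i (k + 1) + q) (timeIndex m (k + 1) i (i (k + 1) + q)) =
      (xiMap f (sigmaPlus^[i (k + 1) - i k - 1] c) + sol1 w) q := by
  obtain ⟨d, hd⟩ : ∃ d, i (k + 1) = i k + d + 1 := ⟨i (k + 1) - i k - 1, by omega⟩
  have hscale :=
    timeIndex_add_of_le (m := m) fun j hj => (hprev j hj).trans (Nat.le_add_right (i k) d)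
  have hb : ∀ q, u (i k + d + q) (timeIndex m k i (i k + d) * 2 ^ q) = sigmaPlus^[d] c q := by
    intro q
    rw [← hscale, sigmaPlus_iterate_apply, ← hc, add_assoc, add_comm d]
  have hshift : sigmaPlus^[i (k + 1) - i k] c = sigmaPlus (sigmaPlus^[d] c) := by
    rw [show i (k + 1) - i k = d + 1 by omega, Function.iterate_succ_apply']
  rw [hshift, hd] at hw
  have htime : timeIndex m (k + 1) i (i (k + 1) + q) =
      (2 * timeIndex m k i (i k + d) + 1) * 2 ^ q := by
    rw [timeIndex_succ, Nat.add_sub_cancel_left, hd, add_assoc _ 1, hscale, pow_add]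
    ring
  rw [htime, show i (k + 1) - i k - 1 = d by omega, hd]
  exact congrFun (hu.turnover_eq_xiMap_add_sol1 (by omega) hb hw) q

end

theorem theorem2_general_general
    (f : ℝ → ℝ → ℝ)
    (N : ℕ) (α : ℝ)
    (a : ℕ → ℝ)
    (u : ℕ → ℕ → ℝ) (hu : IsSol f N α a u)
    (m k : ℕ) (i : ℕ → ℕ)
    (hi0 : i 0 = 0) (himono : ∀ j, j < k → i j < i (j + 1)) (hik : i k ≤ N)
    (A : ℕ → ℕ → ℝ) (hA0 : A 0 = a)
    (V : ℕ → ℕ → ℕ → ℝ)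
    (hV : ∀ r, r < m → IsSol f N α (A r) (V r) ∧ A (r + 1) = sol1 (V r))
    (S : ℕ → ℕ → ℝ) (hS0 : S 0 = A m)
    (W : ℕ → ℕ → ℕ → ℝ)
    (hW : ∀ j, j < k →
      IsSol f (N - i (j + 1)) α (sigmaPlus^[i (j + 1) - i j] (S j)) (W j) ∧
      S (j + 1) = xiMap f (sigmaPlus^[i (j + 1) - i j - 1] (S j)) + sol1 (W j)) :
    ∀ q : ℕ,
      u (i k + q)
        (m * 2 ^ (i k + q) + ∑ j ∈ Finset.range k, 2 ^ (i k + q - i (j + 1))) =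
      S k q := by
  have hmono : MonotoneOn i (Set.Iic k) :=
    (strictMonoOn_Iic_of_lt_succ fun j hj => by simpa using himono j hj).monotoneOn
  suffices h : ∀ k' ≤ k, ∀ q, u (i k' + q) (timeIndex m k' i (i k' + q)) = S k' q from
    h k le_rfl
  intro k' hk'
  induction k' with
  | zero =>
    simpa [timeIndex, hi0, hS0] using hu.apply_mul_two_pow_eq_iterate hA0 hV m le_rfl
  | succ k' ih =>
    obtain ⟨hWsol, hS⟩ := hW k' hk'
    rw [hS]
    exact hu.apply_timeIndex_succ (himono k' hk')
      ((hmono (by simpa using hk') (by simp) hk').trans hik)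
      (fun j hj => hmono (by simp; omega) (by simp; omega) (by omega)) (ih (by omega)) hWsol

/-- Theorem 2, general form: let `u` solve the
`(N,α)`-regularized initial value problem with data `a` and consider the time
`t = m + τ_{i_1} + ⋯ + τ_{i_k}` with `0 = i_0 < i_1 < ⋯ < i_k ≤ N`.
Let `A r` be the `r`-th iterate of the flow map `φ^{(N,α)}` on `a`, realized by
a chain of solutions `V r` (so `A m = (φ^{(N,α)})^{∘m}(a)`), and let
`S j = Ψ_j ∘ ⋯ ∘ Ψ_1 (A m)` be realized by solutions `W j`, where
`Ψ_j = ξ ∘ σ₊^{Δi_j − 1} + φ^{(N − i_j,α)} ∘ σ₊^{Δi_j}`, `Δi_j = i_j − i_{j−1}`.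
Then `(u_{i_k}(t), u_{i_k+1}(t), …) = S k`; at scale `n = i_k + q` the
per-scale time index of `t` is `m·2^n + Σ_{j=1}^{k} 2^{n − i_j}`. -/
theorem theorem2_general
    (f : ℝ → ℝ → ℝ) (hf : ∀ x y : ℝ, 0 ≤ x → 0 ≤ y → f x y ∈ Set.Icc (0 : ℝ) 1)
    (N : ℕ) (α : ℝ) (hα : α ∈ Set.Icc (0 : ℝ) 1)
    (a : ℕ → ℝ) (ha : ∀ n, 0 ≤ a n)
    (u : ℕ → ℕ → ℝ) (hu : IsSol f N α a u)
    (m k : ℕ) (i : ℕ → ℕ)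
    (hi0 : i 0 = 0) (himono : ∀ j, j < k → i j < i (j + 1)) (hik : i k ≤ N)
    (A : ℕ → ℕ → ℝ) (hA0 : A 0 = a)
    (V : ℕ → ℕ → ℕ → ℝ)
    (hV : ∀ r, r < m → IsSol f N α (A r) (V r) ∧ A (r + 1) = sol1 (V r))
    (S : ℕ → ℕ → ℝ) (hS0 : S 0 = A m)
    (W : ℕ → ℕ → ℕ → ℝ)
    (hW : ∀ j, j < k →
      IsSol f (N - i (j + 1)) α (sigmaPlus^[i (j + 1) - i j] (S j)) (W j) ∧
      S (j + 1) = xiMap f (sigmaPlus^[i (j + 1) - i j - 1] (S j)) + sol1 (W j)) :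
    ∀ q : ℕ,
      u (i k + q)
        (m * 2 ^ (i k + q) + ∑ j ∈ Finset.range k, 2 ^ (i k + q - i (j + 1))) =
      S k q :=
  theorem2_general_general f N α a u hu m k i hi0 himono hik A hA0 V hV S hS0 W hW
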